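/- arXiv:1703.05433 — 3 statements merged into one kernel-verified Lean document; each statement's English description precedes it below -/
import Mathlib

section
/- Let P = {x ∈ ℝ^m : α_i x ≥ 0 for all i ∈ ι} for a finite family of affine maps α_i : ℝ^m → ℝ, and suppose v ∈ ℝ^m spans an infinite ray in P. Then the saturation of P_v under all translations along v is the closed polyhedron cut out by the v-invariant inequalities: P_v + ℝ•v = {x ∈ ℝ^m : α_i x ≥ 0 for every i with (α_i).linear v = 0}. In particular, P_v + ℝ•v is a closed subset of ℝ^m. -/
/-!
Since `v` spans a ray in `P`, each `α i` is nondecreasing along `v`. A translate of a point of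
`P_v` along `v` therefore satisfies the `v`-invariant inequalities, because those do not change
along `v`. Conversely, if `y` satisfies them, every other `α j` grows without bound along `v`, so
`y + t • v ∈ P_v` for all large `t`. The resulting set is an intersection of closed half-spaces.
-/

open Filter

theorem AffineMap.map_add_smul {k V : Type*} [Ring k] [AddCommGroup V] [Module k V]
    (f : V →ᵃ[k] k) (x v : V) (t : k) :
    f (x + t • v) = f x + t * f.linear v := by
  rw [add_comm x, ← vadd_eq_add, f.map_vadd, map_smul, smul_eq_mul, vadd_eq_add, add_comm]

section Saturation

variable {k V ι : Type*} [Field k] [LinearOrder k] [IsStrictOrderedRing k]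
  [AddCommGroup V] [Module k V]

theorem AffineMap.linear_nonneg_of_forall_nonneg_add_smul {f : V →ᵃ[k] k} {p v : V}
    (h : ∀ t : k, 0 ≤ t → 0 ≤ f (p + t • v)) : 0 ≤ f.linear v := by
  by_contra! hneg
  have hp : 0 ≤ f p := by simpa using h 0 le_rfl
  have ht : 0 ≤ f p / -f.linear v + 1 :=
    add_nonneg (div_nonneg hp (neg_nonneg.mpr hneg.le)) zero_le_one
  -- at this `t` the value `f p + t * f.linear v` is exactly `f.linear v < 0`
  have hval : f (p + (f p / -f.linear v + 1) • v) = f.linear v := by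
    rw [f.map_add_smul]
    field_simp [hneg.ne]
    ring
  linarith [h _ ht]

theorem AffineMap.eventually_pos_add_smul {f : V →ᵃ[k] k} {v : V} (hv : 0 < f.linear v)
    (y : V) : ∀ᶠ t in (atTop : Filter k), 0 < f (y + t • v) := by
  filter_upwards [eventually_gt_atTop (-f y / f.linear v)] with t ht
  rw [f.map_add_smul]
  rw [div_lt_iff₀ hv] at ht
  linarith

variable [Finite ι] {α : ι → V →ᵃ[k] k} {v : V}

theorem exists_add_smul_mem_tangentStrata (hv : ∀ i, 0 ≤ (α i).linear v) {y : V}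
    (hy : ∀ i, (α i).linear v = 0 → 0 ≤ α i y) :
    ∃ t : k, (∀ i, 0 ≤ α i (y + t • v)) ∧ ∀ j, (α j).linear v ≠ 0 → 0 < α j (y + t • v) := by
  have hev : ∀ i, ∀ᶠ t in (atTop : Filter k),
      0 ≤ α i (y + t • v) ∧ ((α i).linear v ≠ 0 → 0 < α i (y + t • v)) := by
    intro i
    rcases (hv i).eq_or_lt with h | h
    · refine Eventually.of_forall fun t => ⟨?_, fun hne => absurd h.symm hne⟩
      rw [(α i).map_add_smul, ← h, mul_zero, add_zero]
      exact hy i h.symm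
    · filter_upwards [(α i).eventually_pos_add_smul h y] with t ht
      exact ⟨ht.le, fun _ => ht⟩
  obtain ⟨t, ht⟩ := (eventually_all.mpr hev).exists
  exact ⟨t, fun i => (ht i).1, fun j => (ht j).2⟩

theorem saturation_tangentStrata_eq (hv : ∀ i, 0 ≤ (α i).linear v) :
    {y | ∃ x ∈ {x | (∀ i, 0 ≤ α i x) ∧ ∀ j, (α j).linear v ≠ 0 → 0 < α j x},
      ∃ t : k, y = x + t • v} = {x | ∀ i, (α i).linear v = 0 → 0 ≤ α i x} := by
  ext y
  constructor
  · rintro ⟨x, ⟨hx, -⟩, t, rfl⟩ i hi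
    rw [(α i).map_add_smul, hi, mul_zero, add_zero]
    exact hx i
  · intro hy
    obtain ⟨t, ht⟩ := exists_add_smul_mem_tangentStrata hv hy
    exact ⟨y + t • v, ht, -t, by rw [neg_smul, add_neg_cancel_right]⟩

end Saturation

theorem isClosed_setOf_forall_linear_eq_zero_imp_nonneg {V ι : Type*}
    [AddCommGroup V] [Module ℝ V] [TopologicalSpace V]
    {α : ι → V →ᵃ[ℝ] ℝ} (hα : ∀ i, Continuous (α i)) (v : V) :
    IsClosed {x | ∀ i, (α i).linear v = 0 → 0 ≤ α i x} := by
  simp only [Set.ofPred_forall]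
  exact isClosed_iInter fun i => isClosed_iInter fun _ => isClosed_le continuous_const (hα i)

/-- If `P = {x : ℝ^m | ∀ i, α i x ≥ 0}` for a finite family of affine maps and
`v` spans an infinite ray in `P`, then the saturation of
`P_v = {x | ∀ i, α i x ≥ 0, and α j x > 0 whenever (α j).linear v ≠ 0}`
under all translations along `v` is the closed polyhedron cut out by the
`v`-invariant inequalities; in particular it is a closed subset of `ℝ^m`. -/
theorem Pv_saturation_eq_and_isClosed
    {m : ℕ} {ι : Type*} [Finite ι]
    (α : ι → ((Fin m → ℝ) →ᵃ[ℝ] ℝ))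
    (P : Set (Fin m → ℝ)) (hP : P = {x | ∀ i, 0 ≤ α i x})
    (v : Fin m → ℝ)
    (hray : ∃ p ∈ P, ∀ t : ℝ, 0 ≤ t → p + t • v ∈ P)
    (Pv : Set (Fin m → ℝ))
    (hPv : Pv = {x | (∀ i, 0 ≤ α i x) ∧ ∀ j, (α j).linear v ≠ 0 → 0 < α j x}) :
    {y | ∃ x ∈ Pv, ∃ t : ℝ, y = x + t • v} =
      {x | ∀ i, (α i).linear v = 0 → 0 ≤ α i x} ∧
    IsClosed {y | ∃ x ∈ Pv, ∃ t : ℝ, y = x + t • v} := by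
  subst hP hPv
  obtain ⟨p, -, hp⟩ := hray
  have hv : ∀ i, 0 ≤ (α i).linear v := fun i =>
    (α i).linear_nonneg_of_forall_nonneg_add_smul fun t ht => hp t ht i
  rw [saturation_tangentStrata_eq hv]
  exact ⟨rfl, isClosed_setOf_forall_linear_eq_zero_imp_nonneg
    (fun i => (α i).continuous_of_finiteDimensional) v⟩
end

section
/- Let P = {x ∈ ℝ^m : α_i x ≥ 0 for all i ∈ ι} for a finite family of affine maps α_i : ℝ^m → ℝ (so P is complete, i.e. closed), and suppose a nonzero v ∈ ℝ^m spans an infinite ray in P. Then P/v is complete: the image π(P_v) of P_v under the canonical projection π : ℝ^m → ℝ^m ⧸ (ℝ ∙ v) onto the quotient by the line spanned by v is a closed subset of the quotient. -/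
/-!
Along the ray every constraint grows linearly, so `(α i).linear v ≥ 0` for all `i`. Hence the
constraints with `(α i).linear v > 0` can be made to hold strictly by sliding any point far
enough along `v`, and `π(P_v) = π(Q)` for the cylinder `Q` cut out by the constraints with
`(α i).linear v = 0` alone. `Q` is closed and invariant under translation by `ℝ ∙ v`, so its
image under the quotient map is closed.
-/

theorem exists_forall_pos_add_mul {ι : Type*} [Finite ι] (b c : ι → ℝ) :
    ∃ t : ℝ, ∀ i, 0 < c i → 0 < b i + t * c i := by
  obtain ⟨t, ht⟩ := Finite.exists_le fun i => (1 - b i) / c i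
  refine ⟨t, fun i hci => ?_⟩
  have := (div_le_iff₀ hci).1 (ht i)
  linarith

theorem Submodule.isClosed_image_mkQ_of_add_mem {R M : Type*} [Ring R] [AddCommGroup M]
    [Module R M] [TopologicalSpace M] (S : Submodule R M) {s : Set M} (hs : IsClosed s)
    (hsat : ∀ x ∈ s, ∀ y ∈ S, x + y ∈ s) : IsClosed (S.mkQ '' s) := by
  rw [← S.isQuotientMap_mkQ.isClosed_preimage]
  convert hs
  refine Set.Subset.antisymm ?_ (Set.subset_preimage_image _ _)
  rintro x ⟨y, hy, hyx⟩
  have hxy : x - y ∈ S := (Submodule.Quotient.eq S).1 hyx.symm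
  simpa using hsat y hy (x - y) hxy

namespace AffineMap

variable {E : Type*} [AddCommGroup E] [Module ℝ E]

theorem apply_add_smul (a : E →ᵃ[ℝ] ℝ) (x v : E) (t : ℝ) :
    a (x + t • v) = a x + t * a.linear v := by
  rw [add_comm, ← vadd_eq_add, map_vadd, LinearMap.map_smul, smul_eq_mul, vadd_eq_add, add_comm]

theorem linear_nonneg_of_forall_nonneg_ray (a : E →ᵃ[ℝ] ℝ) {p v : E}
    (h : ∀ t : ℝ, 0 ≤ t → 0 ≤ a (p + t • v)) : 0 ≤ a.linear v := by
  by_contra! hneg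
  have hp : 0 ≤ a p := by simpa using h 0 le_rfl
  have ht := h ((a p + 1) / -a.linear v) (div_nonneg (by linarith) (by linarith))
  rw [apply_add_smul, div_mul_eq_mul_div, div_neg, mul_div_cancel_right₀ _ hneg.ne] at ht
  linarith

end AffineMap

section RayCylinder

variable {E ι : Type*} [AddCommGroup E] [Module ℝ E]

/-- The cylinder `P_v + ℝ ∙ v`, once every `(α i).linear v` is nonnegative. -/
def rayCylinder (α : ι → E →ᵃ[ℝ] ℝ) (v : E) : Set E :=
  {x | ∀ i, (α i).linear v = 0 → 0 ≤ α i x}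

theorem add_mem_rayCylinder (α : ι → E →ᵃ[ℝ] ℝ) (v : E) {x y : E} (hx : x ∈ rayCylinder α v)
    (hy : y ∈ Submodule.span ℝ {v}) : x + y ∈ rayCylinder α v := by
  obtain ⟨t, rfl⟩ := Submodule.mem_span_singleton.1 hy
  intro i hi
  simpa [AffineMap.apply_add_smul, hi] using hx i hi

theorem isClosed_rayCylinder [TopologicalSpace E] [IsTopologicalAddGroup E]
    [ContinuousSMul ℝ E] [T2Space E] [FiniteDimensional ℝ E] (α : ι → E →ᵃ[ℝ] ℝ) (v : E) :
    IsClosed (rayCylinder α v) := by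
  simp only [rayCylinder, Set.ofPred_forall]
  exact isClosed_iInter fun i => isClosed_iInter fun _ => isClosed_le continuous_const
    (AffineMap.continuous_linear_iff.1 (α i).linear.continuous_of_finiteDimensional)

theorem image_mkQ_eq_image_mkQ_rayCylinder [Finite ι] (α : ι → E →ᵃ[ℝ] ℝ) {v : E}
    (hc : ∀ i, 0 ≤ (α i).linear v) :
    (Submodule.span ℝ {v}).mkQ ''
        {x | (∀ i, 0 ≤ α i x) ∧ ∀ j, (α j).linear v ≠ 0 → 0 < α j x} =
      (Submodule.span ℝ {v}).mkQ '' rayCylinder α v := by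
  refine Set.Subset.antisymm (Set.image_mono fun x hx i _ => hx.1 i) ?_
  rintro _ ⟨x, hx, rfl⟩
  obtain ⟨t, ht⟩ := exists_forall_pos_add_mul (fun i => α i x) fun i => (α i).linear v
  have hpos : ∀ j, (α j).linear v ≠ 0 → 0 < α j (x + t • v) := fun j hj => by
    rw [AffineMap.apply_add_smul]
    exact ht j ((hc j).lt_of_ne' hj)
  refine ⟨x + t • v, ⟨fun i => ?_, hpos⟩, ?_⟩
  · by_cases hi : (α i).linear v = 0
    · simpa [AffineMap.apply_add_smul, hi] using hx i hi
    · exact (hpos i hi).le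
  · have htv : t • v ∈ Submodule.span ℝ {v} := Submodule.mem_span_singleton.2 ⟨t, rfl⟩
    simp [(Submodule.Quotient.mk_eq_zero _).2 htv]

end RayCylinder

theorem quotient_of_polytope_by_infinite_ray_isClosed_general
    {m : ℕ} {ι : Type*} [Finite ι]
    (α : ι → ((Fin m → ℝ) →ᵃ[ℝ] ℝ))
    (P : Set (Fin m → ℝ)) (hP : P = {x | ∀ i, 0 ≤ α i x})
    (v : Fin m → ℝ)
    (hray : ∃ p ∈ P, ∀ t : ℝ, 0 ≤ t → p + t • v ∈ P)
    (Pv : Set (Fin m → ℝ))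
    (hPv : Pv = {x | (∀ i, 0 ≤ α i x) ∧ ∀ j, (α j).linear v ≠ 0 → 0 < α j x}) :
    IsClosed ((Submodule.span ℝ {v}).mkQ '' Pv) := by
  subst hP hPv
  obtain ⟨p, -, hp⟩ := hray
  have hc : ∀ i, 0 ≤ (α i).linear v := fun i =>
    (α i).linear_nonneg_of_forall_nonneg_ray fun t ht => hp t ht i
  rw [image_mkQ_eq_image_mkQ_rayCylinder α hc]
  exact Submodule.isClosed_image_mkQ_of_add_mem _ (isClosed_rayCylinder α v)
    fun x hx y hy => add_mem_rayCylinder α v hx hy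

/-- If `P = {x : ℝ^m | ∀ i, α i x ≥ 0}` for a finite family of affine maps (so
`P` is complete, i.e. closed) and a nonzero `v` spans an infinite ray in `P`,
then `P/v` is complete: the image of
`P_v = {x | ∀ i, α i x ≥ 0, and α j x > 0 whenever (α j).linear v ≠ 0}`
under the canonical projection `ℝ^m → ℝ^m ⧸ ℝ∙v` is closed. -/
theorem quotient_of_polytope_by_infinite_ray_isClosed
    {m : ℕ} {ι : Type*} [Finite ι]
    (α : ι → ((Fin m → ℝ) →ᵃ[ℝ] ℝ))
    (P : Set (Fin m → ℝ)) (hP : P = {x | ∀ i, 0 ≤ α i x})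
    (v : Fin m → ℝ) (hv : v ≠ 0)
    (hray : ∃ p ∈ P, ∀ t : ℝ, 0 ≤ t → p + t • v ∈ P)
    (Pv : Set (Fin m → ℝ))
    (hPv : Pv = {x | (∀ i, 0 ≤ α i x) ∧ ∀ j, (α j).linear v ≠ 0 → 0 < α j x}) :
    IsClosed ((Submodule.span ℝ {v}).mkQ '' Pv) :=
  quotient_of_polytope_by_infinite_ray_isClosed_general α P hP v hray Pv hPv
end

section
/- Let P = {x ∈ ℝ^m : α_i x ≥ 0 for all i ∈ ι} for a finite family of affine maps α_i : ℝ^m → ℝ, and suppose v ∈ ℝ^m spans an infinite ray in P. Then P/v is defined by the projections of the v-invariant inequalities: (1) π(P_v) = π({x ∈ ℝ^m : α_i x ≥ 0 for every i with (α_i).linear v = 0}); and (2) for every i with (α_i).linear v = 0 there is a (unique) affine map β_i : ℝ^m ⧸ (ℝ ∙ v) → ℝ with β_i ∘ π = α_i, and π(P_v) = {y ∈ ℝ^m ⧸ (ℝ ∙ v) : β_i y ≥ 0 for every i with (α_i).linear v = 0}. -/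
/-!
Along the ray direction `v` every constraint that moves with `v` must increase (otherwise the
ray would leave `P`), so pushing any point far enough along `v` makes all those constraints
strictly positive while leaving the `v`-invariant ones unchanged. Hence a point satisfying the
`v`-invariant inequalities has a translate in `P_v` with the same image in `ℝ^m ⧸ ℝ∙v`, and the
invariant constraints are exactly the ones that descend to the quotient.
-/

open Filter

namespace AffineMap

section Ring

variable {k V W : Type*} [Ring k] [AddCommGroup V] [Module k V] [AddCommGroup W] [Module k W]

theorem existsUnique_comp_mkQ (f : V →ᵃ[k] W) (S : Submodule k V)
    (hS : S ≤ LinearMap.ker f.linear) :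
    ∃! β : V ⧸ S →ᵃ[k] W, ∀ x, β (S.mkQ x) = f x := by
  have hf : ∀ x, f x = f.linear x + f 0 := fun x => by simpa using f.map_vadd 0 x
  refine ⟨(S.liftQ f.linear hS).toAffineMap + const k _ (f 0), fun x => ?_, fun β hβ => ?_⟩
  · simp [hf x]
  · ext y
    obtain ⟨x, rfl⟩ := S.mkQ_surjective y
    rw [hβ]
    simp [hf x]

theorem apply_add_smul_s6 (f : V →ᵃ[k] k) (x v : V) (t : k) :
    f (x + t • v) = f x + t * f.linear v := by
  rw [add_comm, ← vadd_eq_add, f.map_vadd, map_smul, smul_eq_mul, vadd_eq_add, add_comm]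

end Ring

section Ray

variable {k V : Type*} [Field k] [LinearOrder k] [IsStrictOrderedRing k]
  [AddCommGroup V] [Module k V]

theorem tendsto_apply_add_smul_atTop (f : V →ᵃ[k] k) (x : V) {v : V} (hv : 0 < f.linear v) :
    Tendsto (fun t : k => f (x + t • v)) atTop atTop := by
  simp_rw [f.apply_add_smul_s6]
  exact tendsto_atTop_add_const_left _ _ (tendsto_id.atTop_mul_const hv)

theorem tendsto_apply_add_smul_atBot (f : V →ᵃ[k] k) (x : V) {v : V} (hv : f.linear v < 0) :
    Tendsto (fun t : k => f (x + t • v)) atTop atBot := by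
  simp_rw [f.apply_add_smul_s6]
  exact tendsto_atBot_add_const_left _ _ (tendsto_id.atTop_mul_const_of_neg hv)

theorem linear_nonneg_of_forall_nonneg_add_smul_s6 (f : V →ᵃ[k] k) {p v : V}
    (h : ∀ t : k, 0 ≤ t → 0 ≤ f (p + t • v)) : 0 ≤ f.linear v := by
  by_contra! hv
  obtain ⟨t, ht, hneg⟩ := ((eventually_ge_atTop 0).and
    ((f.tendsto_apply_add_smul_atBot p hv).eventually_lt_atBot 0)).exists
  exact hneg.not_ge (h t ht)

theorem exists_forall_pos_add_smul {ι : Type*} [Finite ι] (f : ι → V →ᵃ[k] k) (x : V) {v : V}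
    (hv : ∀ i, 0 < (f i).linear v) : ∃ t : k, ∀ i, 0 < f i (x + t • v) :=
  (eventually_all.2 fun i =>
    ((f i).tendsto_apply_add_smul_atTop x (hv i)).eventually_gt_atTop 0).exists

end Ray

end AffineMap

theorem Submodule.mkQ_add_smul_span_singleton {R M : Type*} [Ring R] [AddCommGroup M]
    [Module R M] (x v : M) (t : R) : (R ∙ v).mkQ (x + t • v) = (R ∙ v).mkQ x := by
  rw [mkQ_apply, mkQ_apply, Quotient.eq, add_sub_cancel_left]
  exact smul_mem _ t (mem_span_singleton_self v)

/-- If `P = {x : ℝ^m | ∀ i, α i x ≥ 0}` for a finite family of affine maps and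
`v` spans an infinite ray in `P`, then `P/v := π(P_v)` is defined by the
projections of the `v`-invariant inequalities, where
`π : ℝ^m → ℝ^m ⧸ ℝ∙v` is the canonical projection:
(1) `π(P_v)` equals the image under `π` of the polyhedron cut out by the
inequalities whose linear part annihilates `v`;
(2) each such `α i` descends to a unique affine map `β i` on the quotient, and
`π(P_v)` is cut out by the inequalities `β i ≥ 0`. -/
theorem quotient_polytope_defined_by_projected_inequalities
    {m : ℕ} {ι : Type*} [Finite ι]
    (α : ι → ((Fin m → ℝ) →ᵃ[ℝ] ℝ))
    (P : Set (Fin m → ℝ)) (hP : P = {x | ∀ i, 0 ≤ α i x})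
    (v : Fin m → ℝ)
    (hray : ∃ p ∈ P, ∀ t : ℝ, 0 ≤ t → p + t • v ∈ P)
    (Pv : Set (Fin m → ℝ))
    (hPv : Pv = {x | (∀ i, 0 ≤ α i x) ∧ ∀ j, (α j).linear v ≠ 0 → 0 < α j x}) :
    ((Submodule.span ℝ {v}).mkQ '' Pv =
        (Submodule.span ℝ {v}).mkQ ''
          {x | ∀ i, (α i).linear v = 0 → 0 ≤ α i x}) ∧
    (∀ i, (α i).linear v = 0 →
      ∃! β : ((Fin m → ℝ) ⧸ Submodule.span ℝ {v}) →ᵃ[ℝ] ℝ,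
        ∀ x, β ((Submodule.span ℝ {v}).mkQ x) = α i x) ∧
    (∀ β : ι → (((Fin m → ℝ) ⧸ Submodule.span ℝ {v}) →ᵃ[ℝ] ℝ),
      (∀ i, (α i).linear v = 0 →
        ∀ x, β i ((Submodule.span ℝ {v}).mkQ x) = α i x) →
      (Submodule.span ℝ {v}).mkQ '' Pv =
        {y | ∀ i, (α i).linear v = 0 → 0 ≤ β i y}) := by
  subst hP hPv
  obtain ⟨p, -, hpray⟩ := hray
  set π := (Submodule.span ℝ {v}).mkQ
  have hslope : ∀ j : {j // (α j).linear v ≠ 0}, 0 < (α j).linear v := fun j =>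
    ((α j).linear_nonneg_of_forall_nonneg_add_smul_s6 fun t ht => hpray t ht j).lt_of_ne' j.2
  have himage : π '' {x | (∀ i, 0 ≤ α i x) ∧ ∀ j, (α j).linear v ≠ 0 → 0 < α j x} =
      π '' {x | ∀ i, (α i).linear v = 0 → 0 ≤ α i x} := by
    refine (Set.image_mono fun x hx i _ => hx.1 i).antisymm ?_
    rintro _ ⟨x, hx, rfl⟩
    obtain ⟨t, ht⟩ :=
      AffineMap.exists_forall_pos_add_smul (fun j : {j // (α j).linear v ≠ 0} => α j) x hslope
    have hpos : ∀ j, (α j).linear v ≠ 0 → 0 < α j (x + t • v) := fun j hj => ht ⟨j, hj⟩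
    refine ⟨x + t • v, ⟨fun i => ?_, hpos⟩, Submodule.mkQ_add_smul_span_singleton x v t⟩
    by_cases hi : (α i).linear v = 0
    · simpa [AffineMap.apply_add_smul_s6, hi] using hx i hi
    · exact (hpos i hi).le
  refine ⟨himage, fun i hi => (α i).existsUnique_comp_mkQ _ ?_, fun β hβ => ?_⟩
  · exact (Submodule.span_singleton_le_iff_mem _ _).2 hi
  · have hpre : {x | ∀ i, (α i).linear v = 0 → 0 ≤ α i x} =
        π ⁻¹' {y | ∀ i, (α i).linear v = 0 → 0 ≤ β i y} := by
      ext x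
      exact forall₂_congr fun i hi => by rw [hβ i hi]
    rw [himage, hpre, Set.image_preimage_eq _ (Submodule.mkQ_surjective _)]
end
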